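/- For every n ≥ 1, one has ‖Ψ_n‖ ≤ n, and for every k with 1 ≤ k ≤ n, the substituted partial Bell polynomial satisfies ‖B_{n,k}(ψ_1,…,ψ_{n-k+1})‖ ≤ n; moreover B_{n,n}(ψ_1) = x_1^n. -/

import Mathlib

open scoped BigOperators

/-- Partial Bell polynomial `B_{n,k}`; the variable `X i` represents `x_{i+1}`. -/
noncomputable def bellPartial (n k : ℕ) : MvPolynomial ℕ ℤ :=
  ∑ j : Fin (n - k + 1) → Fin (n + 1),
    if (∑ ν : Fin (n - k + 1), ((ν : ℕ) + 1) * (j ν : ℕ)) = n ∧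
        (∑ ν : Fin (n - k + 1), (j ν : ℕ)) = k then
      (MvPolynomial.C ((n.factorial /
          ∏ ν : Fin (n - k + 1),
            ((j ν : ℕ).factorial * ((ν : ℕ) + 1).factorial ^ (j ν : ℕ)) : ℕ) : ℤ)) *
        ∏ ν : Fin (n - k + 1), MvPolynomial.X (ν : ℕ) ^ (j ν : ℕ)
    else 0

/-- Complete Bell polynomial `B_n = ∑_{k=1}^n B_{n,k}`. -/
noncomputable def bellComplete (n : ℕ) : MvPolynomial ℕ ℤ :=
  ∑ k ∈ Finset.Icc 1 n, bellPartial n k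

/-- `σ̂*_k(x_1,…,x_k) = (-1)^k B_k(-0!·x_1, -1!·x_2, …, -(k-1)!·x_k)`
(recall `X i` represents `x_{i+1}`, so `x_{i+1} ↦ -i!·x_{i+1}`). -/
noncomputable def sigmaStar (k : ℕ) : MvPolynomial ℕ ℤ :=
  (-1) ^ k * MvPolynomial.aeval
    (fun i : ℕ => MvPolynomial.C (-(i.factorial : ℤ)) * MvPolynomial.X i)
    (bellComplete k)

/-- Signed Stirling numbers of the first kind:
`x(x-1)⋯(x-n+1) = ∑_{k=0}^n s(n,k) x^k`. -/
noncomputable def stirlingFirst (n k : ℕ) : ℤ :=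
  (∏ i ∈ Finset.range n, (Polynomial.X - Polynomial.C (i : ℤ))).coeff k

/-- `Ψ_n` built from a family `f` playing the role of `ψ`:
`Ψ_n = ∑_{ν=2}^{n} ∑_{k=0}^{min(ν,n-ν)} (-1)^{ν+1} s(ν+1,k+1) (n)_k B_{n-k,ν}(f_1,…,f_{n-k-ν+1})`. -/
noncomputable def PsiOf (f : ℕ → MvPolynomial ℕ ℤ) (n : ℕ) : MvPolynomial ℕ ℤ :=
  ∑ ν ∈ Finset.Icc 2 n, ∑ k ∈ Finset.range (min ν (n - ν) + 1),
    MvPolynomial.C ((-1) ^ (ν + 1) * stirlingFirst (ν + 1) (k + 1) *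
        ((n.factorial / (n - k).factorial : ℕ) : ℤ)) *
      MvPolynomial.aeval (fun i : ℕ => f (i + 1)) (bellPartial (n - k) ν)

/-- The polynomials `ψ_n`, with `ψ_0 = 0` and `ψ_n = n·ψ_{n-1} + σ̂*_n + Ψ_n` for `n ≥ 1`. -/
noncomputable def psi : ℕ → MvPolynomial ℕ ℤ := fun n =>
  Nat.strongRecOn n fun n ih =>
    if h : n = 0 then 0
    else
      (n : ℤ) • ih (n - 1) (by omega) + sigmaStar n +
        PsiOf (fun m => if hm : m < n then ih m hm else 0) n

/-- The polynomials `Ψ_n`. -/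
noncomputable def Psi (n : ℕ) : MvPolynomial ℕ ℤ := PsiOf psi n

/-- The weighted degree `∑_i i·e_i` of a monomial (recall `X i` represents `x_{i+1}`). -/
def wdeg (d : ℕ →₀ ℕ) : ℕ := ∑ i ∈ d.support, (i + 1) * d i

open MvPolynomial

def W (p : MvPolynomial ℕ ℤ) (m : ℕ) : Prop := ∀ d ∈ p.support, wdeg d ≤ m

lemma wdeg_eq (d : ℕ →₀ ℕ) : wdeg d = d.sum fun i e => (i + 1) * e := rfl

lemma wdeg_add (a b : ℕ →₀ ℕ) : wdeg (a + b) = wdeg a + wdeg b := by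
  simp only [wdeg_eq]
  exact Finsupp.sum_add_index' (fun i => mul_zero _) (fun i x y => mul_add _ _ _)

lemma W_mono {p : MvPolynomial ℕ ℤ} {m m' : ℕ} (h : W p m) (hm : m ≤ m') : W p m' :=
  fun d hd => (h d hd).trans hm

lemma W_zero (m : ℕ) : W 0 m := by simp [W]

lemma W_C (c : ℤ) (m : ℕ) : W (C c) m := by
  intro d hd
  rw [MvPolynomial.mem_support_iff, MvPolynomial.coeff_C] at hd
  split_ifs at hd with h
  · subst h; simp [wdeg_eq]
  · simp at hd

lemma W_add {p q : MvPolynomial ℕ ℤ} {m : ℕ} (hp : W p m) (hq : W q m) : W (p + q) m := by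
  intro d hd
  rcases Finset.mem_union.1 (MvPolynomial.support_add hd) with h | h
  exacts [hp d h, hq d h]

lemma W_sum {α : Type*} (s : Finset α) (f : α → MvPolynomial ℕ ℤ) (m : ℕ)
    (h : ∀ a ∈ s, W (f a) m) : W (∑ a ∈ s, f a) m := by
  classical
  induction s using Finset.induction_on with
  | empty => simpa using W_zero m
  | insert _ _ hx ih =>
    rw [Finset.sum_insert hx]
    exact W_add (h _ (Finset.mem_insert_self _ _)) (ih fun a ha => h a (Finset.mem_insert_of_mem ha))

lemma W_mul {p q : MvPolynomial ℕ ℤ} {a b : ℕ} (hp : W p a) (hq : W q b) : W (p * q) (a + b) := by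
  intro d hd
  have := MvPolynomial.support_mul p q hd
  rw [Finset.mem_add] at this
  obtain ⟨d1, hd1, d2, hd2, rfl⟩ := this
  rw [wdeg_add]
  exact Nat.add_le_add (hp d1 hd1) (hq d2 hd2)

lemma W_pow {p : MvPolynomial ℕ ℤ} {a : ℕ} (hp : W p a) (e : ℕ) : W (p ^ e) (a * e) := by
  induction e with
  | zero => simpa using W_C 1 0
  | succ e ih =>
    rw [pow_succ, Nat.mul_succ]
    exact W_mul ih hp

lemma W_prod {α : Type*} (s : Finset α) (f : α → MvPolynomial ℕ ℤ) (b : α → ℕ)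
    (h : ∀ a ∈ s, W (f a) (b a)) : W (∏ a ∈ s, f a) (∑ a ∈ s, b a) := by
  classical
  induction s using Finset.induction_on with
  | empty => simpa using W_C 1 0
  | insert _ _ hx ih =>
    rw [Finset.prod_insert hx, Finset.sum_insert hx]
    exact W_mul (h _ (Finset.mem_insert_self _ _)) (ih fun a ha => h a (Finset.mem_insert_of_mem ha))

lemma W_X (i : ℕ) : W (X i : MvPolynomial ℕ ℤ) (i + 1) := by
  intro d hd
  rw [MvPolynomial.support_X, Finset.mem_singleton] at hd
  subst hd
  simp [wdeg_eq, Finsupp.sum_single_index]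

lemma W_smul (c : ℤ) {p : MvPolynomial ℕ ℤ} {m : ℕ} (hp : W p m) : W (c • p) m :=
  fun d hd => hp d (MvPolynomial.support_smul hd)
lemma W_aeval_bell (h : ℕ → MvPolynomial ℕ ℤ) (hh : ∀ i, W (h i) (i + 1)) (m k : ℕ) :
    W (MvPolynomial.aeval h (bellPartial m k)) m := by
  rw [bellPartial, map_sum]
  apply W_sum
  intro j _
  rw [apply_ite (MvPolynomial.aeval h), map_zero]
  split_ifs with hc
  · simp only [map_mul, map_prod, map_pow, MvPolynomial.aeval_C, MvPolynomial.aeval_X,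
      MvPolynomial.algebraMap_eq]
    have h2 : W (∏ ν : Fin (m - k + 1), h (ν : ℕ) ^ (j ν : ℕ))
        (∑ ν : Fin (m - k + 1), ((ν : ℕ) + 1) * (j ν : ℕ)) := by
      apply W_prod
      intro ν _
      exact W_pow (hh ν) _
    rw [hc.1] at h2
    exact W_mono (W_mul (W_C _ 0) h2) (by omega)
  · exact W_zero m

lemma W_PsiOf (f : ℕ → MvPolynomial ℕ ℤ) (hf : ∀ i, W (f i) i) (n : ℕ) : W (PsiOf f n) n := by
  rw [PsiOf]
  apply W_sum
  intro ν _
  apply W_sum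
  intro k _
  have h2 := W_aeval_bell (fun i => f (i + 1)) (fun i => hf (i + 1)) (n - k) ν
  exact W_mono (W_mul (W_C _ 0) h2) (by omega)

lemma W_sigmaStar (k : ℕ) : W (sigmaStar k) k := by
  rw [sigmaStar]
  have h1 : W ((-1 : MvPolynomial ℕ ℤ) ^ k) 0 := by
    have h : ((-1 : MvPolynomial ℕ ℤ)) = C (-1) := by simp
    rw [h, ← map_pow]
    exact W_C _ 0
  have h2 : W (MvPolynomial.aeval
      (fun i : ℕ => MvPolynomial.C (-(i.factorial : ℤ)) * MvPolynomial.X i) (bellComplete k)) k := by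
    rw [bellComplete, map_sum]
    apply W_sum
    intro i _
    apply W_aeval_bell
    intro i
    exact W_mono (W_mul (W_C _ 0) (W_X i)) (by omega)
  exact W_mono (W_mul h1 h2) (by omega)

lemma psi_eq (n : ℕ) : psi n = if n = 0 then 0 else
    (n : ℤ) • psi (n - 1) + sigmaStar n +
      PsiOf (fun m => if _ : m < n then psi m else 0) n := by
  unfold psi
  rw [Nat.strongRecOn_eq]
  rfl

lemma W_psi (n : ℕ) : W (psi n) n := by
  induction n using Nat.strongRecOn with
  | ind n ih =>
    rw [psi_eq]
    split_ifs with h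
    · exact W_zero _
    · apply W_add (W_add ?_ (W_sigmaStar n)) ?_
      · exact W_mono (W_smul _ (ih (n - 1) (by omega))) (by omega)
      · apply W_PsiOf
        intro m
        split
        · exact ih m ‹_›
        · exact W_zero _

lemma bell_diag (n : ℕ) : bellPartial n n = MvPolynomial.X 0 ^ n := by
  rw [bellPartial, show n - n + 1 = 1 from by omega,
    ← Equiv.sum_comp (Equiv.funUnique (Fin 1) (Fin (n + 1))).symm]
  rw [Finset.sum_eq_single (Fin.last n)]
  · simp [Nat.factorial, Nat.div_self n.factorial_pos]
  · intro v _ hv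
    rw [if_neg]
    simp only [Fin.sum_univ_one, Equiv.funUnique_symm_apply]
    rintro ⟨-, h2⟩
    exact hv (Fin.ext (by simpa using h2))
  · simp

lemma psi_one : psi 1 = MvPolynomial.X 0 := by
  have h0 : psi 0 = 0 := by rw [psi_eq]; simp
  have hP : PsiOf (fun m => if _ : m < 1 then psi m else 0) 1 = 0 := by
    rw [PsiOf, show Finset.Icc 2 1 = ∅ from rfl]
    simp
  have hs : sigmaStar 1 = MvPolynomial.X 0 := by
    rw [sigmaStar, bellComplete, show Finset.Icc 1 1 = {1} from rfl,
      Finset.sum_singleton, bell_diag]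
    simp [Nat.factorial]
  rw [psi_eq, if_neg one_ne_zero, h0, hP, hs]
  simp


theorem stmt15 (n : ℕ) (hn : 1 ≤ n) :
    (∀ d ∈ (Psi n).support, wdeg d ≤ n) ∧
    (∀ k, 1 ≤ k → k ≤ n →
      ∀ d ∈ (MvPolynomial.aeval (fun i : ℕ => psi (i + 1)) (bellPartial n k)).support,
        wdeg d ≤ n) ∧
    MvPolynomial.aeval (fun i : ℕ => psi (i + 1)) (bellPartial n n) =
      MvPolynomial.X 0 ^ n := by
  refine ⟨?_, ?_, ?_⟩
  · exact fun d hd => W_PsiOf psi W_psi n d hd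
  · exact fun k _ _ d hd => W_aeval_bell _ (fun i => W_psi (i + 1)) n k d hd
  · rw [bell_diag, map_pow, MvPolynomial.aeval_X, psi_one]
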